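/- Well-posedness of the overlapping scheme with coarse-flux/fine-pressure matching: augment the one-dimensional composite finite volume scheme with additional unknowns p_{I+1}^{n,k} (k = 1,…,𝒦) and p_I^{n} (n = 1,…,N₂), interface fluxes u_{I+1/2}^{n,k} = (p_{I+1}^{n,k} − p_I^{n,k})/(x_{I+1} − x_I) and u_{I+1/2}^{n} = (p_{I+1}^{n} − p_I^{n})/(x_{I+1} − x_I), and interface conditions, for every n: δt₂ u_{I+1/2}^{n} = Σ_{k=1}^{𝒦} δt₁ u_{I+1/2}^{n,k} and p_{I+1}^{n,k} = p_{I+1}^{n} for all k. Then for every choice of sources f_j^{n,k}, f_j^{n} and initial values p_j^0, the resulting finite linear system has exactly one solution (p_j^{n,k} for j ≤ I, p_j^{n} for j > I, p_{I+1}^{n,k}, p_I^{n}). -/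

import Mathlib

open Finset

/-- Cell center `x_j = (x_{j-1/2} + x_{j+1/2})/2`, where `xh j` denotes `x_{j+1/2}`
(so `xh 0 = x_{1/2}`, …, `xh J = x_{J+1/2}`). -/
noncomputable def xc (xh : ℕ → ℝ) (j : ℕ) : ℝ := (xh (j - 1) + xh j) / 2

/-- Cell width `h_j = x_{j+1/2} − x_{j−1/2}`. -/
noncomputable def hw (xh : ℕ → ℝ) (j : ℕ) : ℝ := xh j - xh (j - 1)

/-- The previous fine-time value `p_j^{n,k−1}`, with the conventions
`p_j^{n,0} = p_j^{n−1,𝒦}` and `p_j^{1,0} = p_j^0`. -/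
def prevF (K : ℕ) (p0 : ℕ → ℝ) (p1 : ℕ → ℕ → ℕ → ℝ) (n k j : ℕ) : ℝ :=
  if k = 1 then (if n = 1 then p0 j else p1 (n - 1) K j) else p1 n (k - 1) j

/-- The previous coarse-time value `p_j^{n−1}`, with the convention `p_j^0 = p_j^0`. -/
def prevC (p0 : ℕ → ℝ) (p2 : ℕ → ℕ → ℝ) (n j : ℕ) : ℝ :=
  if n = 1 then p0 j else p2 (n - 1) j

/-- Fine fluxes `u_{j+1/2}^{n,k}` for face indices `j = 0,…,I` in the overlapping
scheme: `u_{1/2}^{n,k} = p_1^{n,k}/(x_1 − x_{1/2})`,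
`u_{j+1/2}^{n,k} = (p_{j+1}^{n,k} − p_j^{n,k})/(x_{j+1} − x_j)` for `1 ≤ j < I`, and the
interface flux `u_{I+1/2}^{n,k} = (p_{I+1}^{n,k} − p_I^{n,k})/(x_{I+1} − x_I)`, where
`r1 n k` denotes the extra unknown `p_{I+1}^{n,k}`. -/
noncomputable def uF (I : ℕ) (xh : ℕ → ℝ) (p1 : ℕ → ℕ → ℕ → ℝ) (r1 : ℕ → ℕ → ℝ)
    (n k j : ℕ) : ℝ :=
  if j = 0 then p1 n k 1 / (xc xh 1 - xh 0)
  else if j < I then (p1 n k (j + 1) - p1 n k j) / (xc xh (j + 1) - xc xh j)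
  else (r1 n k - p1 n k I) / (xc xh (I + 1) - xc xh I)

/-- Coarse fluxes `u_{j+1/2}^{n}` for face indices `j = I,…,J` in the overlapping
scheme: the interface flux `u_{I+1/2}^{n} = (p_{I+1}^{n} − p_I^{n})/(x_{I+1} − x_I)`
(where `r2 n` denotes the extra unknown `p_I^{n}`),
`u_{j+1/2}^{n} = (p_{j+1}^{n} − p_j^{n})/(x_{j+1} − x_j)` for `I < j < J`, and
`u_{J+1/2}^{n} = −p_J^{n}/(x_{J+1/2} − x_J)`. -/
noncomputable def uC (I J : ℕ) (xh : ℕ → ℝ) (p2 : ℕ → ℕ → ℝ) (r2 : ℕ → ℝ)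
    (n j : ℕ) : ℝ :=
  if j = J then -(p2 n J) / (xh J - xc xh J)
  else if I < j then (p2 n (j + 1) - p2 n j) / (xc xh (j + 1) - xc xh j)
  else (p2 n (I + 1) - r2 n) / (xc xh (I + 1) - xc xh I)

/-- The interior scheme equations of the one-dimensional composite finite volume scheme:
`(h_j/δt₁)(p_j^{n,k} − p_j^{n,k−1}) − (u_{j+1/2}^{n,k} − u_{j−1/2}^{n,k}) = h_j f_j^{n,k}`
for `j = 1,…,I`, `n = 1,…,N₂`, `k = 1,…,𝒦`, and
`(h_j/δt₂)(p_j^{n} − p_j^{n−1}) − (u_{j+1/2}^{n} − u_{j−1/2}^{n}) = h_j f_j^{n}`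
for `j = I+1,…,J`, `n = 1,…,N₂`. -/
def SchemeEqs (J I K N2 : ℕ) (δt1 δt2 : ℝ) (xh : ℕ → ℝ)
    (p0 : ℕ → ℝ) (f1 : ℕ → ℕ → ℕ → ℝ) (f2 : ℕ → ℕ → ℝ)
    (p1 : ℕ → ℕ → ℕ → ℝ) (p2 : ℕ → ℕ → ℝ) (r1 : ℕ → ℕ → ℝ) (r2 : ℕ → ℝ) : Prop :=
  (∀ n ∈ Icc 1 N2, ∀ k ∈ Icc 1 K, ∀ j ∈ Icc 1 I,
      (hw xh j / δt1) * (p1 n k j - prevF K p0 p1 n k j)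
        - (uF I xh p1 r1 n k j - uF I xh p1 r1 n k (j - 1)) = hw xh j * f1 n k j)
  ∧ (∀ n ∈ Icc 1 N2, ∀ j ∈ Icc (I + 1) J,
      (hw xh j / δt2) * (p2 n j - prevC p0 p2 n j)
        - (uC I J xh p2 r2 n j - uC I J xh p2 r2 n (j - 1)) = hw xh j * f2 n j)

/-- Interface conditions of the overlapping scheme with coarse-flux/fine-pressure
matching: `δt₂ u_{I+1/2}^{n} = ∑_{k=1}^{𝒦} δt₁ u_{I+1/2}^{n,k}` and
`p_{I+1}^{n,k} = p_{I+1}^{n}` for all `k`. -/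
def InterfaceCoarseFluxOverlap (J I K N2 : ℕ) (δt1 δt2 : ℝ) (xh : ℕ → ℝ)
    (p1 : ℕ → ℕ → ℕ → ℝ) (p2 : ℕ → ℕ → ℝ) (r1 : ℕ → ℕ → ℝ) (r2 : ℕ → ℝ) : Prop :=
  ∀ n ∈ Icc 1 N2,
    δt2 * uC I J xh p2 r2 n I = ∑ k ∈ Icc 1 K, δt1 * uF I xh p1 r1 n k I
    ∧ ∀ k ∈ Icc 1 K, r1 n k = p2 n (I + 1)

/-!
Each coarse step is a square linear system in the fine values `p_j^{n,k}`, the fine ghost values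
`p_{I+1}^{n,k}`, the coarse values `p_j^n` and the coarse ghost value `p_I^n`, so it suffices to
show that its homogeneous version has only the trivial solution; the steps are then solved one
after the other. Multiply the fine equations by `δt₁ p_j^{n,k}`, the coarse ones by `δt₂ p_j^n`, and
sum by parts. Since the fine ghost values equal `p_{I+1}^n` and `δt₂ u_{I+1/2}^n` is the sum of the
`δt₁ u_{I+1/2}^{n,k}`, the interface terms cancel and what is left is
`∑ₖ ∑ⱼ hⱼ (pⱼᵏ - pⱼᵏ⁻¹) pⱼᵏ + ∑ⱼ hⱼ (pⱼ)² + δt₁ ∑ₖ ∑ᵢ dᵢ (uᵢᵏ)² + δt₂ ∑_{i > I} dᵢ (uᵢ)² = 0`,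
a sum of nonnegative terms (the first one telescopes to at least `∑ⱼ hⱼ (pⱼᴷ)² / 2`).
So every flux vanishes (the coarse interface flux by the flux matching), and then the Dirichlet
boundary values force every pressure to vanish.
-/

theorem LinearMap.surjective_of_ker_le_ker {K V W : Type*} [Field K] [AddCommGroup V]
    [Module K V] [AddCommGroup W] [Module K W] [FiniteDimensional K W] {L R : V →ₗ[K] W}
    (hR : Function.Surjective R) (hker : LinearMap.ker L ≤ LinearMap.ker R) :
    Function.Surjective L := by
  obtain ⟨E, hE⟩ := R.exists_rightInverse_of_surjective (LinearMap.range_eq_top.2 hR)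
  have hinj : Function.Injective (L ∘ₗ E) := by
    refine (injective_iff_map_eq_zero _).2 fun w hw => ?_
    simpa [← LinearMap.comp_apply R E, hE] using hker hw
  exact .of_comp (LinearMap.injective_iff_surjective.1 hinj)

theorem sum_Icc_sub_mul_of_sub_eq_mul {p G D : ℕ → ℝ} {s m : ℕ} (hsm : s ≤ m)
    (hG : ∀ i ∈ Icc s m, p (i + 1) - p i = D i * G i) :
    ∑ j ∈ Icc (s + 1) m, (G j - G (j - 1)) * p j
      = G m * p (m + 1) - G s * p s - ∑ i ∈ Icc s m, D i * G i ^ 2 := by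
  induction m, hsm using Nat.le_induction with
  | base =>
    rw [Icc_eq_empty_of_lt (Nat.lt_succ_self s), sum_empty, Icc_self, sum_singleton]
    linear_combination -G s * hG s (by simp)
  | succ m hsm ih =>
    rw [sum_Icc_succ_top (by omega), ih fun i hi => hG i (by grind),
      sum_Icc_succ_top (by omega), Nat.add_sub_cancel]
    linear_combination -G (m + 1) * hG (m + 1) (by grind)

theorem eq_of_forall_succ_eq {p : ℕ → ℝ} {s m : ℕ} (h : ∀ i ∈ Ico s m, p (i + 1) = p i) :
    ∀ i ∈ Icc s m, p i = p s := by
  intro i hi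
  obtain ⟨hsi, him⟩ := mem_Icc.1 hi
  induction i, hsi using Nat.le_induction with
  | base => rfl
  | succ i hsi ih => rw [h i (mem_Ico.2 ⟨hsi, him⟩), ih (mem_Icc.2 ⟨hsi, by omega⟩) (by omega)]

theorem sum_Icc_sub_mul_self_nonneg {x : ℕ → ℝ} (hx : x 0 = 0) (K : ℕ) :
    0 ≤ ∑ k ∈ Icc 1 K, (x k - x (k - 1)) * x k := by
  suffices x K ^ 2 / 2 ≤ ∑ k ∈ Icc 1 K, (x k - x (k - 1)) * x k from le_trans (by positivity) this
  induction K with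
  | zero => simp [hx]
  | succ K ih =>
    rw [sum_Icc_succ_top (by omega), Nat.add_sub_cancel]
    nlinarith [sq_nonneg (x (K + 1) - x K)]

section Geometry

variable {J : ℕ} {xh : ℕ → ℝ}

theorem xh_pred_lt (hxmono : ∀ j < J, xh j < xh (j + 1)) {j : ℕ} (h1 : 1 ≤ j) (hjJ : j ≤ J) :
    xh (j - 1) < xh j := by
  simpa [Nat.sub_add_cancel h1] using hxmono (j - 1) (by omega)

theorem hw_pos (hxmono : ∀ j < J, xh j < xh (j + 1)) {j : ℕ} (h1 : 1 ≤ j) (hjJ : j ≤ J) :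
    0 < hw xh j :=
  sub_pos.2 (xh_pred_lt hxmono h1 hjJ)

theorem xc_zero : xc xh 0 = xh 0 := by
  simp [xc]

/-- The distance `x_{i+1} - x_i` between neighbouring pressure nodes, where the boundary nodes
are `x_0 = x_{1/2}` (this is `xc xh 0`, as `0 - 1 = 0` in `ℕ`) and `x_{J+1} = x_{J+1/2}`. -/
noncomputable def nodeGap (J : ℕ) (xh : ℕ → ℝ) (i : ℕ) : ℝ :=
  if i = J then xh J - xc xh J else xc xh (i + 1) - xc xh i

theorem nodeGap_of_lt {i : ℕ} (hi : i < J) : nodeGap J xh i = xc xh (i + 1) - xc xh i :=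
  if_neg hi.ne

theorem nodeGap_pos (hxmono : ∀ j < J, xh j < xh (j + 1)) (hJ : 0 < J) {i : ℕ} (hi : i ≤ J) :
    0 < nodeGap J xh i := by
  rcases hi.lt_or_eq with hiJ | rfl
  · have hpred : xh (i - 1) ≤ xh i := by
      rcases Nat.eq_zero_or_pos i with rfl | hi0
      · rfl
      · exact (xh_pred_lt hxmono hi0 hiJ.le).le
    rw [nodeGap_of_lt hiJ, xc, xc, Nat.add_sub_cancel]
    linarith [hxmono i hiJ]
  · simp only [nodeGap, if_pos, xc]
    linarith [xh_pred_lt hxmono hJ le_rfl]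

end Geometry

section Profiles

variable {I J : ℕ} {xh : ℕ → ℝ}

-- The pressures of one fine level on the nodes `0, …, I + 1` and of the coarse level on the nodes
-- `I, …, J + 1`, padded with the ghost values and the Dirichlet value `0`: on these nodes both
-- fluxes are plain difference quotients over `nodeGap` (`fineProfile_succ_sub`,
-- `coarseProfile_succ_sub`).
def fineProfile (I : ℕ) (x : ℕ → ℝ) (y : ℝ) (j : ℕ) : ℝ :=
  if j = 0 then 0 else if j ≤ I then x j else y

def coarseProfile (I J : ℕ) (c : ℕ → ℝ) (d : ℝ) (j : ℕ) : ℝ :=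
  if j ≤ I then d else if j ≤ J then c j else 0

noncomputable def fineFlux (I : ℕ) (xh : ℕ → ℝ) (x : ℕ → ℝ) (y : ℝ) : ℕ → ℝ :=
  uF I xh (fun _ _ => x) (fun _ _ => y) 0 0

noncomputable def coarseFlux (I J : ℕ) (xh : ℕ → ℝ) (c : ℕ → ℝ) (d : ℝ) : ℕ → ℝ :=
  uC I J xh (fun _ => c) (fun _ => d) 0

theorem fineProfile_zero (x : ℕ → ℝ) (y : ℝ) : fineProfile I x y 0 = 0 := if_pos rfl

theorem fineProfile_of_mem (x : ℕ → ℝ) (y : ℝ) {j : ℕ} (hj : j ∈ Icc 1 I) :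
    fineProfile I x y j = x j := by
  rw [fineProfile, if_neg (by grind), if_pos (mem_Icc.1 hj).2]

theorem fineProfile_succ_self (x : ℕ → ℝ) (y : ℝ) : fineProfile I x y (I + 1) = y := by
  rw [fineProfile, if_neg (by omega), if_neg (by omega)]

theorem coarseProfile_self (c : ℕ → ℝ) (d : ℝ) : coarseProfile I J c d I = d := if_pos le_rfl

theorem coarseProfile_of_mem (c : ℕ → ℝ) (d : ℝ) {j : ℕ} (hj : j ∈ Icc (I + 1) J) :
    coarseProfile I J c d j = c j := by
  rw [coarseProfile, if_neg (by grind), if_pos (mem_Icc.1 hj).2]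

theorem coarseProfile_succ_self (hIJ : I ≤ J) (c : ℕ → ℝ) (d : ℝ) :
    coarseProfile I J c d (J + 1) = 0 := by
  rw [coarseProfile, if_neg (by omega), if_neg (by omega)]

theorem uF_eq_fineFlux (p1 : ℕ → ℕ → ℕ → ℝ) (r1 : ℕ → ℕ → ℝ) (n k : ℕ) :
    uF I xh p1 r1 n k = fineFlux I xh (p1 n k) (r1 n k) := rfl

theorem uC_eq_coarseFlux (p2 : ℕ → ℕ → ℝ) (r2 : ℕ → ℝ) (n : ℕ) :
    uC I J xh p2 r2 n = coarseFlux I J xh (p2 n) (r2 n) := rfl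

theorem fineProfile_succ_sub (hxmono : ∀ j < J, xh j < xh (j + 1)) (hI : 1 ≤ I) (hIJ : I < J)
    (x : ℕ → ℝ) (y : ℝ) {j : ℕ} (hj : j ≤ I) :
    fineProfile I x y (j + 1) - fineProfile I x y j = nodeGap J xh j * fineFlux I xh x y j := by
  have hD := (nodeGap_pos hxmono (by omega) (i := j) (by omega)).ne'
  rw [nodeGap_of_lt (by omega)] at hD ⊢
  rcases Nat.eq_zero_or_pos j with rfl | hj0
  · rw [xc_zero] at hD ⊢
    simp [fineProfile, fineFlux, uF, hI, mul_div_cancel₀ _ hD]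
  rcases hj.lt_or_eq with hjI | rfl
  · simp [fineProfile, fineFlux, uF, hj0.ne', hjI, hjI.le, Nat.succ_le_of_lt hjI,
      mul_div_cancel₀ _ hD]
  · simp [fineProfile, fineFlux, uF, hj0.ne', mul_div_cancel₀ _ hD]

theorem coarseProfile_succ_sub (hxmono : ∀ j < J, xh j < xh (j + 1)) (hIJ : I < J)
    (c : ℕ → ℝ) (d : ℝ) {j : ℕ} (hIj : I ≤ j) (hjJ : j ≤ J) :
    coarseProfile I J c d (j + 1) - coarseProfile I J c d j
      = nodeGap J xh j * coarseFlux I J xh c d j := by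
  have hD := (nodeGap_pos hxmono (by omega) hjJ).ne'
  rcases hjJ.lt_or_eq with hjJ | rfl
  · rw [nodeGap_of_lt hjJ] at hD ⊢
    rcases hIj.lt_or_eq with hIj | rfl
    · simp [coarseProfile, coarseFlux, uC, hjJ.ne, hjJ.le, hIj, hIj.not_gt, hIj.not_ge,
        Nat.succ_le_of_lt hjJ, mul_div_cancel₀ _ hD]
    · simp [coarseProfile, coarseFlux, uC, hjJ.ne, Nat.succ_le_of_lt hjJ, mul_div_cancel₀ _ hD]
  · simp only [nodeGap, if_pos] at hD ⊢
    simp [coarseProfile, coarseFlux, uC, hIJ.not_gt, hIJ.not_ge, neg_div, mul_div_cancel₀ _ hD]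

theorem fineFlux_add (x x' : ℕ → ℝ) (y y' : ℝ) :
    fineFlux I xh (x + x') (y + y') = fineFlux I xh x y + fineFlux I xh x' y' := by
  ext j; simp only [fineFlux, uF, Pi.add_apply]; split_ifs <;> ring

theorem fineFlux_smul (r : ℝ) (x : ℕ → ℝ) (y : ℝ) :
    fineFlux I xh (r • x) (r * y) = r • fineFlux I xh x y := by
  ext j; simp only [fineFlux, uF, Pi.smul_apply, smul_eq_mul]; split_ifs <;> ring

theorem coarseFlux_add (c c' : ℕ → ℝ) (d d' : ℝ) :
    coarseFlux I J xh (c + c') (d + d') = coarseFlux I J xh c d + coarseFlux I J xh c' d' := by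
  ext j; simp only [coarseFlux, uC, Pi.add_apply]; split_ifs <;> ring

theorem coarseFlux_smul (r : ℝ) (c : ℕ → ℝ) (d : ℝ) :
    coarseFlux I J xh (r • c) (r * d) = r • coarseFlux I J xh c d := by
  ext j; simp only [coarseFlux, uC, Pi.smul_apply, smul_eq_mul]; split_ifs <;> ring

end Profiles

section Step

variable (I J K : ℕ) (δt1 δt2 : ℝ) (xh : ℕ → ℝ)

abbrev StepVars : Type := (ℕ → ℕ → ℝ) × (ℕ → ℝ) × (ℕ → ℝ) × ℝ

-- Indexes both the unknowns and the equations of one coarse step: fine cells `(k, j)` (fine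
-- equations), fine ghost values `k` (pressure matching), coarse cells `j` (coarse equations) and
-- the coarse ghost value (flux matching).
abbrev StepIdx : Type :=
  {kj : ℕ × ℕ // kj ∈ Icc 1 K ×ˢ Icc 1 I} ⊕ {k // k ∈ Icc 1 K} ⊕ {j // j ∈ Icc (I + 1) J} ⊕ Unit

def stepCoords : StepVars →ₗ[ℝ] (StepIdx I J K → ℝ) where
  toFun s
    | .inl ⟨(k, j), _⟩ => s.1 k j
    | .inr (.inl ⟨k, _⟩) => s.2.1 k
    | .inr (.inr (.inl ⟨j, _⟩)) => s.2.2.1 j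
    | .inr (.inr (.inr _)) => s.2.2.2
  map_add' _ _ := by ext (⟨⟨k, j⟩, _⟩ | ⟨k, _⟩ | ⟨j, _⟩ | _) <;> rfl
  map_smul' _ _ := by ext (⟨⟨k, j⟩, _⟩ | ⟨k, _⟩ | ⟨j, _⟩ | _) <;> rfl

-- The level `k = 1` looks back to the previous coarse step, which is data and goes to `stepRhs`.
noncomputable def stepMap : StepVars →ₗ[ℝ] (StepIdx I J K → ℝ) where
  toFun s
    | .inl ⟨(k, j), _⟩ =>
      hw xh j / δt1 * (s.1 k j - if k = 1 then 0 else s.1 (k - 1) j)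
        - (fineFlux I xh (s.1 k) (s.2.1 k) j - fineFlux I xh (s.1 k) (s.2.1 k) (j - 1))
    | .inr (.inl ⟨k, _⟩) => s.2.1 k - s.2.2.1 (I + 1)
    | .inr (.inr (.inl ⟨j, _⟩)) =>
      hw xh j / δt2 * s.2.2.1 j
        - (coarseFlux I J xh s.2.2.1 s.2.2.2 j - coarseFlux I J xh s.2.2.1 s.2.2.2 (j - 1))
    | .inr (.inr (.inr _)) =>
      δt2 * coarseFlux I J xh s.2.2.1 s.2.2.2 I
        - ∑ k ∈ Icc 1 K, δt1 * fineFlux I xh (s.1 k) (s.2.1 k) I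
  map_add' s s' := by
    ext (⟨⟨k, j⟩, _⟩ | ⟨k, _⟩ | ⟨j, _⟩ | _) <;>
      simp only [Prod.fst_add, Prod.snd_add, Pi.add_apply, fineFlux_add, coarseFlux_add,
        mul_add, sum_add_distrib] <;>
      (try split_ifs) <;> ring
  map_smul' r s := by
    ext (⟨⟨k, j⟩, _⟩ | ⟨k, _⟩ | ⟨j, _⟩ | _) <;>
      simp only [Prod.smul_fst, Prod.smul_snd, Pi.smul_apply, smul_eq_mul, fineFlux_smul,
        coarseFlux_smul, RingHom.id_apply, mul_left_comm δt1 r, ← mul_sum] <;>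
      (try split_ifs) <;> ring


noncomputable def stepRhs (qF qC : ℕ → ℝ) (g1 : ℕ → ℕ → ℝ) (g2 : ℕ → ℝ) : StepIdx I J K → ℝ
  | .inl ⟨(k, j), _⟩ => hw xh j * g1 k j + if k = 1 then hw xh j / δt1 * qF j else 0
  | .inr (.inl _) => 0
  | .inr (.inr (.inl ⟨j, _⟩)) => hw xh j * g2 j + hw xh j / δt2 * qC j
  | .inr (.inr (.inr _)) => 0

variable {I J K δt1 δt2 xh}

theorem stepRhs_congr {qF qF' qC qC' : ℕ → ℝ} (hF : ∀ j ∈ Icc 1 I, qF j = qF' j)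
    (hC : ∀ j ∈ Icc (I + 1) J, qC j = qC' j) (g1 : ℕ → ℕ → ℝ) (g2 : ℕ → ℝ) :
    stepRhs I J K δt1 δt2 xh qF qC g1 g2 = stepRhs I J K δt1 δt2 xh qF' qC' g1 g2 := by
  ext (⟨⟨k, j⟩, hkj⟩ | _ | ⟨j, hj⟩ | _) <;> simp only [stepRhs]
  · rw [hF j (mem_product.1 hkj).2]
  · rw [hC j hj]

end Step

theorem schemeEqs_and_interface_iff {J I K N2 : ℕ} {δt1 δt2 : ℝ} {xh p0 : ℕ → ℝ}
    {f1 : ℕ → ℕ → ℕ → ℝ} {f2 : ℕ → ℕ → ℝ} {p1 : ℕ → ℕ → ℕ → ℝ} {p2 : ℕ → ℕ → ℝ}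
    {r1 : ℕ → ℕ → ℝ} {r2 : ℕ → ℝ} :
    SchemeEqs J I K N2 δt1 δt2 xh p0 f1 f2 p1 p2 r1 r2
        ∧ InterfaceCoarseFluxOverlap J I K N2 δt1 δt2 xh p1 p2 r1 r2
      ↔ ∀ n ∈ Icc 1 N2, stepMap I J K δt1 δt2 xh (p1 n, r1 n, p2 n, r2 n)
          = stepRhs I J K δt1 δt2 xh (prevF K p0 p1 n 1) (prevC p0 p2 n) (f1 n) (f2 n) := by
  constructor
  · rintro ⟨⟨hF, hC⟩, hX⟩ n hn
    ext (⟨⟨k, j⟩, hkj⟩ | ⟨k, hk⟩ | ⟨j, hj⟩ | _)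
    · have := hF n hn k (mem_product.1 hkj).1 j (mem_product.1 hkj).2
      simp only [stepMap, stepRhs, LinearMap.coe_mk, AddHom.coe_mk, prevF, uF_eq_fineFlux] at this ⊢
      split_ifs at this ⊢ <;> linear_combination this
    · exact sub_eq_zero.2 ((hX n hn).2 k hk)
    · have := hC n hn j hj
      simp only [stepMap, stepRhs, LinearMap.coe_mk, AddHom.coe_mk, prevC, uC_eq_coarseFlux]
        at this ⊢
      split_ifs at this ⊢ <;> linear_combination this
    · exact sub_eq_zero.2 (hX n hn).1
  · intro h
    refine ⟨⟨fun n hn k hk j hj => ?_, fun n hn j hj => ?_⟩, fun n hn => ⟨?_, fun k hk => ?_⟩⟩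
    · have := congrFun (h n hn) (.inl ⟨(k, j), mem_product.2 ⟨hk, hj⟩⟩)
      simp only [stepMap, stepRhs, LinearMap.coe_mk, AddHom.coe_mk, prevF, uF_eq_fineFlux] at this ⊢
      split_ifs at this ⊢ <;> linear_combination this
    · have := congrFun (h n hn) (.inr (.inr (.inl ⟨j, hj⟩)))
      simp only [stepMap, stepRhs, LinearMap.coe_mk, AddHom.coe_mk, prevC, uC_eq_coarseFlux]
        at this ⊢
      split_ifs at this ⊢ <;> linear_combination this
    · exact sub_eq_zero.1 (congrFun (h n hn) (.inr (.inr (.inr ()))))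
    · exact sub_eq_zero.1 (congrFun (h n hn) (.inr (.inl ⟨k, hk⟩)))

section Energy

variable {I J K : ℕ} {δt1 δt2 : ℝ} {xh : ℕ → ℝ}

theorem fine_energy_identity (hxmono : ∀ j < J, xh j < xh (j + 1)) (hI : 1 ≤ I) (hIJ : I < J)
    (hδt1 : δt1 ≠ 0) {x x' : ℕ → ℝ} {y : ℝ}
    (h : ∀ j ∈ Icc 1 I, hw xh j / δt1 * (x j - x' j)
      - (fineFlux I xh x y j - fineFlux I xh x y (j - 1)) = 0) :
    ∑ j ∈ Icc 1 I, hw xh j * (x j - x' j) * x j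
      = δt1 * (fineFlux I xh x y I * y
          - ∑ i ∈ Icc 0 I, nodeGap J xh i * fineFlux I xh x y i ^ 2) := by
  set F := fineFlux I xh x y
  have hsbp := sum_Icc_sub_mul_of_sub_eq_mul (p := fineProfile I x y) (G := F) (D := nodeGap J xh)
    (Nat.zero_le I) fun i hi => fineProfile_succ_sub hxmono hI hIJ x y (mem_Icc.1 hi).2
  calc ∑ j ∈ Icc 1 I, hw xh j * (x j - x' j) * x j
      = δt1 * ∑ j ∈ Icc (0 + 1) I, (F j - F (j - 1)) * fineProfile I x y j := by
        rw [mul_sum]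
        refine sum_congr rfl fun j hj => ?_
        rw [fineProfile_of_mem x y hj]
        field_simp at h ⊢
        linear_combination x j * h j hj
    _ = _ := by rw [hsbp, fineProfile_succ_self, fineProfile_zero, mul_zero, sub_zero]

theorem coarse_energy_identity (hxmono : ∀ j < J, xh j < xh (j + 1)) (hIJ : I < J)
    (hδt2 : δt2 ≠ 0) {c : ℕ → ℝ} {d : ℝ}
    (h : ∀ j ∈ Icc (I + 1) J, hw xh j / δt2 * c j
      - (coarseFlux I J xh c d j - coarseFlux I J xh c d (j - 1)) = 0) :
    ∑ j ∈ Icc (I + 1) J, hw xh j * c j ^ 2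
      = -δt2 * (coarseFlux I J xh c d I * d
          + ∑ i ∈ Icc I J, nodeGap J xh i * coarseFlux I J xh c d i ^ 2) := by
  set V := coarseFlux I J xh c d
  have hsbp := sum_Icc_sub_mul_of_sub_eq_mul (p := coarseProfile I J c d) (G := V)
    (D := nodeGap J xh) hIJ.le fun i hi =>
      coarseProfile_succ_sub hxmono hIJ c d (mem_Icc.1 hi).1 (mem_Icc.1 hi).2
  calc ∑ j ∈ Icc (I + 1) J, hw xh j * c j ^ 2
      = δt2 * ∑ j ∈ Icc (I + 1) J, (V j - V (j - 1)) * coarseProfile I J c d j := by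
        rw [mul_sum]
        refine sum_congr rfl fun j hj => ?_
        rw [coarseProfile_of_mem c d hj]
        field_simp at h ⊢
        linear_combination c j * h j hj
    _ = _ := by rw [hsbp, coarseProfile_succ_self hIJ.le, coarseProfile_self]; ring

theorem step_energy_identity (hxmono : ∀ j < J, xh j < xh (j + 1)) (hI : 1 ≤ I) (hIJ : I < J)
    (hδt1 : δt1 ≠ 0) (hδt2 : δt2 ≠ 0) {a : ℕ → ℕ → ℝ} {b c : ℕ → ℝ} {d : ℝ}
    (hs : stepMap I J K δt1 δt2 xh (a, b, c, d) = 0) :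
    ∑ k ∈ Icc 1 K, ∑ j ∈ Icc 1 I, hw xh j * (a k j - if k = 1 then 0 else a (k - 1) j) * a k j
      + ∑ j ∈ Icc (I + 1) J, hw xh j * c j ^ 2
      + δt1 * ∑ k ∈ Icc 1 K, ∑ i ∈ Icc 0 I, nodeGap J xh i * fineFlux I xh (a k) (b k) i ^ 2
      + δt2 * ∑ i ∈ Ioc I J, nodeGap J xh i * coarseFlux I J xh c d i ^ 2 = 0 := by
  set F := fun k => fineFlux I xh (a k) (b k)
  set V := coarseFlux I J xh c d
  set S := fun k => ∑ i ∈ Icc 0 I, nodeGap J xh i * F k i ^ 2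
  have hfine : ∀ k ∈ Icc 1 K,
      ∑ j ∈ Icc 1 I, hw xh j * (a k j - if k = 1 then 0 else a (k - 1) j) * a k j
        = δt1 * F k I * c (I + 1) - δt1 * S k := fun k hk => by
    have hb : b k = c (I + 1) := sub_eq_zero.1 (congrFun hs (.inr (.inl ⟨k, hk⟩)))
    rw [← hb, mul_assoc, ← mul_sub]
    exact fine_energy_identity hxmono hI hIJ hδt1 fun j hj =>
      congrFun hs (.inl ⟨(k, j), mem_product.2 ⟨hk, hj⟩⟩)
  have hcoarse := coarse_energy_identity hxmono hIJ hδt2 fun j hj =>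
    congrFun hs (.inr (.inr (.inl ⟨j, hj⟩)))
  have hflux : δt2 * V I = ∑ k ∈ Icc 1 K, δt1 * F k I :=
    sub_eq_zero.1 (congrFun hs (.inr (.inr (.inr ()))))
  have hVI := coarseProfile_succ_sub hxmono hIJ c d le_rfl hIJ.le
  rw [coarseProfile_of_mem c d (mem_Icc.2 ⟨le_rfl, hIJ⟩), coarseProfile_self] at hVI
  rw [sum_congr rfl hfine, sum_sub_distrib, ← sum_mul, ← hflux, ← mul_sum, hcoarse,
    ← add_sum_Ioc_eq_sum_Icc hIJ.le]
  linear_combination δt2 * V I * hVI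

theorem fine_time_energy_nonneg (hxmono : ∀ j < J, xh j < xh (j + 1)) (hIJ : I < J)
    (a : ℕ → ℕ → ℝ) :
    0 ≤ ∑ k ∈ Icc 1 K, ∑ j ∈ Icc 1 I,
      hw xh j * (a k j - if k = 1 then 0 else a (k - 1) j) * a k j := by
  rw [sum_comm]
  refine sum_nonneg fun j hj => ?_
  have hhw := hw_pos hxmono (mem_Icc.1 hj).1 (by grind)
  calc 0 ≤ hw xh j * ∑ k ∈ Icc 1 K, ((if k = 0 then 0 else a k j)
        - if k - 1 = 0 then 0 else a (k - 1) j) * if k = 0 then 0 else a k j :=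
        mul_nonneg hhw.le (sum_Icc_sub_mul_self_nonneg (x := fun k => if k = 0 then 0 else a k j)
          rfl K)
    _ = _ := by
      rw [mul_sum]
      refine sum_congr rfl fun k hk => ?_
      have hk1 : k - 1 = 0 ↔ k = 1 := by grind
      simp only [hk1, if_neg (by grind : k ≠ 0), mul_assoc]

theorem eq_zero_of_sum_mul_sq_eq_zero {ι : Type*} {s : Finset ι} {w f : ι → ℝ}
    (hw : ∀ i ∈ s, 0 < w i) (h : ∑ i ∈ s, w i * f i ^ 2 = 0) : ∀ i ∈ s, f i = 0 := by
  intro i hi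
  have := (sum_eq_zero_iff_of_nonneg fun i hi => mul_nonneg (hw i hi).le (sq_nonneg (f i))).1 h i hi
  simpa [(hw i hi).ne'] using this

theorem fluxes_eq_zero_of_stepMap_eq_zero (hxmono : ∀ j < J, xh j < xh (j + 1)) (hI : 1 ≤ I)
    (hIJ : I < J) (hδt1 : 0 < δt1) (hδt2 : 0 < δt2) {a : ℕ → ℕ → ℝ} {b c : ℕ → ℝ} {d : ℝ}
    (hs : stepMap I J K δt1 δt2 xh (a, b, c, d) = 0) :
    (∀ k ∈ Icc 1 K, ∀ i ∈ Icc 0 I, fineFlux I xh (a k) (b k) i = 0)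
      ∧ ∀ i ∈ Icc I J, coarseFlux I J xh c d i = 0 := by
  have hgapF : ∀ i ∈ Icc 0 I, 0 < nodeGap J xh i := fun i hi =>
    nodeGap_pos hxmono (by omega) (by simp at hi; omega)
  have hgapC : ∀ i ∈ Ioc I J, 0 < nodeGap J xh i := fun i hi =>
    nodeGap_pos hxmono (by omega) (mem_Ioc.1 hi).2
  have hfine : ∀ k ∈ Icc 1 K, 0 ≤ ∑ i ∈ Icc 0 I, nodeGap J xh i * fineFlux I xh (a k) (b k) i ^ 2 :=
    fun k _ => sum_nonneg fun i hi => mul_nonneg (hgapF i hi).le (sq_nonneg _)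
  have hcoarse : 0 ≤ ∑ i ∈ Ioc I J, nodeGap J xh i * coarseFlux I J xh c d i ^ 2 :=
    sum_nonneg fun i hi => mul_nonneg (hgapC i hi).le (sq_nonneg _)
  have hc : 0 ≤ ∑ j ∈ Icc (I + 1) J, hw xh j * c j ^ 2 := sum_nonneg fun j hj =>
    mul_nonneg (hw_pos hxmono (by simp at hj; omega) (mem_Icc.1 hj).2).le (sq_nonneg (c j))
  have htime := fine_time_energy_nonneg (K := K) hxmono hIJ a
  have hE := step_energy_identity hxmono hI hIJ hδt1.ne' hδt2.ne' hs
  have hF : ∀ k ∈ Icc 1 K, ∀ i ∈ Icc 0 I, fineFlux I xh (a k) (b k) i = 0 := fun k hk =>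
    eq_zero_of_sum_mul_sq_eq_zero hgapF
      ((sum_eq_zero_iff_of_nonneg hfine).1 (by nlinarith [sum_nonneg hfine]) k hk)
  have hV : ∀ i ∈ Ioc I J, coarseFlux I J xh c d i = 0 :=
    eq_zero_of_sum_mul_sq_eq_zero hgapC (by nlinarith [sum_nonneg hfine])
  have hflux : δt2 * coarseFlux I J xh c d I = ∑ k ∈ Icc 1 K, δt1 * fineFlux I xh (a k) (b k) I :=
    sub_eq_zero.1 (congrFun hs (.inr (.inr (.inr ()))))
  rw [sum_eq_zero fun k hk => by rw [hF k hk I (by simp), mul_zero]] at hflux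
  refine ⟨hF, fun i hi => ?_⟩
  rcases (mem_Icc.1 hi).1.eq_or_lt with rfl | hIi
  · simpa [hδt2.ne'] using hflux
  · exact hV i (mem_Ioc.2 ⟨hIi, (mem_Icc.1 hi).2⟩)

theorem fineProfile_eq_zero_of_fineFlux_eq_zero (hxmono : ∀ j < J, xh j < xh (j + 1))
    (hI : 1 ≤ I) (hIJ : I < J) {x : ℕ → ℝ} {y : ℝ}
    (h : ∀ i ∈ Icc 0 I, fineFlux I xh x y i = 0) :
    ∀ j ∈ Icc 0 (I + 1), fineProfile I x y j = 0 := fun j hj =>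
  (eq_of_forall_succ_eq (fun i hi => by
    have hiI : i ≤ I := by simp at hi; omega
    rw [← sub_eq_zero, fineProfile_succ_sub hxmono hI hIJ x y hiI, h i (by simp [hiI]),
      mul_zero]) j hj).trans (if_pos rfl)

theorem coarseProfile_eq_zero_of_coarseFlux_eq_zero (hxmono : ∀ j < J, xh j < xh (j + 1))
    (hIJ : I < J) {c : ℕ → ℝ} {d : ℝ} (h : ∀ i ∈ Icc I J, coarseFlux I J xh c d i = 0) :
    ∀ j ∈ Icc I (J + 1), coarseProfile I J c d j = 0 := by
  have hconst := eq_of_forall_succ_eq (p := coarseProfile I J c d) (s := I) (m := J + 1)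
    fun i hi => by
      have hi' : I ≤ i ∧ i ≤ J := by simp at hi; omega
      rw [← sub_eq_zero, coarseProfile_succ_sub hxmono hIJ c d hi'.1 hi'.2, h i (by simp [hi']),
        mul_zero]
  intro j hj
  rw [hconst j hj, ← hconst (J + 1) (by simp; omega), coarseProfile_succ_self hIJ.le]

theorem stepCoords_eq_zero_of_stepMap_eq_zero (hxmono : ∀ j < J, xh j < xh (j + 1))
    (hI : 1 ≤ I) (hIJ : I < J) (hδt1 : 0 < δt1) (hδt2 : 0 < δt2) {s : StepVars}
    (hs : stepMap I J K δt1 δt2 xh s = 0) : stepCoords I J K s = 0 := by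
  obtain ⟨a, b, c, d⟩ := s
  obtain ⟨hF, hV⟩ := fluxes_eq_zero_of_stepMap_eq_zero hxmono hI hIJ hδt1 hδt2 hs
  have hP k hk := fineProfile_eq_zero_of_fineFlux_eq_zero hxmono hI hIJ (hF k hk)
  have hQ := coarseProfile_eq_zero_of_coarseFlux_eq_zero hxmono hIJ hV
  ext (⟨⟨k, j⟩, hkj⟩ | ⟨k, hk⟩ | ⟨j, hj⟩ | _)
  · obtain ⟨hk, hj⟩ := mem_product.1 hkj
    exact (fineProfile_of_mem _ _ hj).symm.trans (hP k hk j (by simp at hj ⊢; omega))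
  · exact (fineProfile_succ_self _ _).symm.trans (hP k hk (I + 1) (by simp))
  · exact (coarseProfile_of_mem _ _ hj).symm.trans (hQ j (by simp at hj ⊢; omega))
  · exact (coarseProfile_self _ _).symm.trans (hQ I (by simp; omega))

end Energy

section Solvability

variable {I J K : ℕ} {δt1 δt2 : ℝ} {xh : ℕ → ℝ}

theorem stepCoords_surjective : Function.Surjective (stepCoords I J K) := fun y =>
  ⟨(fun k j => if h : (k, j) ∈ Icc 1 K ×ˢ Icc 1 I then y (.inl ⟨(k, j), h⟩) else 0,
    fun k => if h : k ∈ Icc 1 K then y (.inr (.inl ⟨k, h⟩)) else 0,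
    fun j => if h : j ∈ Icc (I + 1) J then y (.inr (.inr (.inl ⟨j, h⟩))) else 0,
    y (.inr (.inr (.inr ())))),
   by ext (⟨⟨k, j⟩, h⟩ | ⟨k, h⟩ | ⟨j, h⟩ | _) <;> first | rfl | exact dif_pos h⟩

theorem stepMap_surjective (hxmono : ∀ j < J, xh j < xh (j + 1)) (hI : 1 ≤ I) (hIJ : I < J)
    (hδt1 : 0 < δt1) (hδt2 : 0 < δt2) : Function.Surjective (stepMap I J K δt1 δt2 xh) :=
  LinearMap.surjective_of_ker_le_ker stepCoords_surjective fun _ hs =>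
    stepCoords_eq_zero_of_stepMap_eq_zero hxmono hI hIJ hδt1 hδt2 hs

theorem stepCoords_eq_of_stepMap_eq (hxmono : ∀ j < J, xh j < xh (j + 1)) (hI : 1 ≤ I)
    (hIJ : I < J) (hδt1 : 0 < δt1) (hδt2 : 0 < δt2) {s s' : StepVars}
    (h : stepMap I J K δt1 δt2 xh s = stepMap I J K δt1 δt2 xh s') :
    stepCoords I J K s = stepCoords I J K s' := by
  rw [← sub_eq_zero, ← map_sub] at h ⊢
  exact stepCoords_eq_zero_of_stepMap_eq_zero hxmono hI hIJ hδt1 hδt2 h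

theorem eqOn_of_stepCoords_eq {s s' : StepVars} (h : stepCoords I J K s = stepCoords I J K s') :
    (∀ k ∈ Icc 1 K, (∀ j ∈ Icc 1 I, s.1 k j = s'.1 k j) ∧ s.2.1 k = s'.2.1 k)
      ∧ (∀ j ∈ Icc (I + 1) J, s.2.2.1 j = s'.2.2.1 j) ∧ s.2.2.2 = s'.2.2.2 :=
  ⟨fun k hk => ⟨fun j hj => congrFun h (.inl ⟨(k, j), mem_product.2 ⟨hk, hj⟩⟩),
    congrFun h (.inr (.inl ⟨k, hk⟩))⟩,
   fun j hj => congrFun h (.inr (.inr (.inl ⟨j, hj⟩))), congrFun h (.inr (.inr (.inr ())))⟩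

variable {N2 : ℕ} {p0 : ℕ → ℝ} {f1 : ℕ → ℕ → ℕ → ℝ} {f2 : ℕ → ℕ → ℝ}

theorem exists_stepwise_solution (hsurj : Function.Surjective (stepMap I J K δt1 δt2 xh)) :
    ∃ (p1 : ℕ → ℕ → ℕ → ℝ) (p2 r1 : ℕ → ℕ → ℝ) (r2 : ℕ → ℝ),
      ∀ n ∈ Icc 1 N2, stepMap I J K δt1 δt2 xh (p1 n, r1 n, p2 n, r2 n)
      = stepRhs I J K δt1 δt2 xh (prevF K p0 p1 n 1) (prevC p0 p2 n) (f1 n) (f2 n) := by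
  choose solve hsolve using hsurj
  let sol : ℕ → StepVars := fun n => Nat.rec (fun _ => p0, 0, p0, 0)
    (fun m s => solve (stepRhs I J K δt1 δt2 xh (s.1 K) s.2.2.1 (f1 (m + 1)) (f2 (m + 1)))) n
  refine ⟨fun n => (sol n).1, fun n => (sol n).2.2.1, fun n => (sol n).2.1,
    fun n => (sol n).2.2.2, fun n hn => ?_⟩
  obtain ⟨m, rfl⟩ : ∃ m, n = m + 1 := ⟨n - 1, by simp at hn; omega⟩
  have hF : prevF K p0 (fun n => (sol n).1) (m + 1) 1 = (sol m).1 K := by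
    funext j; rcases m with _ | m <;> rfl
  have hC : prevC p0 (fun n => (sol n).2.2.1) (m + 1) = (sol m).2.2.1 := by
    funext j; rcases m with _ | m <;> rfl
  rw [hF, hC]
  exact hsolve _

theorem stepCoords_eq_of_stepwise (hK : 1 ≤ K)
    (hinj : ∀ s s' : StepVars, stepMap I J K δt1 δt2 xh s = stepMap I J K δt1 δt2 xh s' →
      stepCoords I J K s = stepCoords I J K s')
    {p1 p1' : ℕ → ℕ → ℕ → ℝ} {p2 p2' r1 r1' : ℕ → ℕ → ℝ} {r2 r2' : ℕ → ℝ}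
    (h : ∀ n ∈ Icc 1 N2, stepMap I J K δt1 δt2 xh (p1 n, r1 n, p2 n, r2 n)
      = stepRhs I J K δt1 δt2 xh (prevF K p0 p1 n 1) (prevC p0 p2 n) (f1 n) (f2 n))
    (h' : ∀ n ∈ Icc 1 N2, stepMap I J K δt1 δt2 xh (p1' n, r1' n, p2' n, r2' n)
      = stepRhs I J K δt1 δt2 xh (prevF K p0 p1' n 1) (prevC p0 p2' n) (f1 n) (f2 n)) :
    ∀ n ∈ Icc 1 N2, stepCoords I J K (p1 n, r1 n, p2 n, r2 n)
      = stepCoords I J K (p1' n, r1' n, p2' n, r2' n) := by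
  intro n hn
  obtain ⟨hn1, hnN⟩ := mem_Icc.1 hn
  induction n, hn1 using Nat.le_induction with
  | base => exact hinj _ _ (by rw [h 1 hn, h' 1 hn]; rfl)
  | succ n hn1 ih =>
    have hprev := eqOn_of_stepCoords_eq (ih (mem_Icc.2 ⟨hn1, by omega⟩) (by omega))
    refine hinj _ _ ?_
    rw [h _ hn, h' _ hn]
    refine stepRhs_congr (fun j hj => ?_) (fun j hj => ?_) _ _
    · simp only [prevF, if_pos, Nat.add_sub_cancel, if_neg (by omega : n + 1 ≠ 1)]
      exact ((hprev.1 K (mem_Icc.2 ⟨hK, le_rfl⟩)).1 j hj)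
    · simp only [prevC, Nat.add_sub_cancel, if_neg (by omega : n + 1 ≠ 1)]
      exact hprev.2.1 j hj

end Solvability

theorem wellposed_overlap_coarse_flux_general
    (J I K N2 : ℕ) (hI1 : 1 ≤ I) (hIJ : I < J) (hK : 1 ≤ K)
    (δt1 : ℝ) (hδt1 : 0 < δt1) (δt2 : ℝ) (hδt2 : δt2 = (K : ℝ) * δt1)
    (xh : ℕ → ℝ) (hxmono : ∀ j < J, xh j < xh (j + 1))
    (p0 : ℕ → ℝ) (f1 : ℕ → ℕ → ℕ → ℝ) (f2 : ℕ → ℕ → ℝ) :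
    (∃ p1 p2 r1 r2,
        SchemeEqs J I K N2 δt1 δt2 xh p0 f1 f2 p1 p2 r1 r2
        ∧ InterfaceCoarseFluxOverlap J I K N2 δt1 δt2 xh p1 p2 r1 r2)
    ∧ ∀ p1 p2 r1 r2 p1' p2' r1' r2',
        SchemeEqs J I K N2 δt1 δt2 xh p0 f1 f2 p1 p2 r1 r2 →
        InterfaceCoarseFluxOverlap J I K N2 δt1 δt2 xh p1 p2 r1 r2 →
        SchemeEqs J I K N2 δt1 δt2 xh p0 f1 f2 p1' p2' r1' r2' →
        InterfaceCoarseFluxOverlap J I K N2 δt1 δt2 xh p1' p2' r1' r2' →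
        ∀ n ∈ Icc 1 N2,
          (∀ k ∈ Icc 1 K, (∀ j ∈ Icc 1 I, p1 n k j = p1' n k j) ∧ r1 n k = r1' n k)
          ∧ (∀ j ∈ Icc (I + 1) J, p2 n j = p2' n j) ∧ r2 n = r2' n := by
  have hδt2pos : 0 < δt2 := hδt2 ▸ mul_pos (Nat.cast_pos.2 hK) hδt1
  refine ⟨?_, fun p1 p2 r1 r2 p1' p2' r1' r2' hS hX hS' hX' n hn => ?_⟩
  · simpa only [schemeEqs_and_interface_iff] using
      exists_stepwise_solution (stepMap_surjective hxmono hI1 hIJ hδt1 hδt2pos)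
  · exact eqOn_of_stepCoords_eq <| stepCoords_eq_of_stepwise hK
      (fun _ _ => stepCoords_eq_of_stepMap_eq hxmono hI1 hIJ hδt1 hδt2pos)
      (schemeEqs_and_interface_iff.1 ⟨hS, hX⟩) (schemeEqs_and_interface_iff.1 ⟨hS', hX'⟩) n hn

/-- Well-posedness of the overlapping scheme with coarse-flux/fine-pressure matching:
for every choice of sources and initial values, the resulting finite linear system has
exactly one solution `(p_j^{n,k}` for `j ≤ I`, `p_j^{n}` for `j > I`, `p_{I+1}^{n,k}`,
`p_I^{n})`. -/
theorem wellposed_overlap_coarse_flux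
    (J I K N2 : ℕ) (hJ : 3 ≤ J) (hI1 : 1 ≤ I) (hIJ : I < J) (hK : 1 ≤ K) (hN2 : 1 ≤ N2)
    (δt1 : ℝ) (hδt1 : 0 < δt1) (δt2 : ℝ) (hδt2 : δt2 = (K : ℝ) * δt1)
    (xh : ℕ → ℝ) (hx0 : xh 0 = 0) (hxmono : ∀ j < J, xh j < xh (j + 1))
    (p0 : ℕ → ℝ) (f1 : ℕ → ℕ → ℕ → ℝ) (f2 : ℕ → ℕ → ℝ) :
    (∃ p1 p2 r1 r2,
        SchemeEqs J I K N2 δt1 δt2 xh p0 f1 f2 p1 p2 r1 r2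
        ∧ InterfaceCoarseFluxOverlap J I K N2 δt1 δt2 xh p1 p2 r1 r2)
    ∧ ∀ p1 p2 r1 r2 p1' p2' r1' r2',
        SchemeEqs J I K N2 δt1 δt2 xh p0 f1 f2 p1 p2 r1 r2 →
        InterfaceCoarseFluxOverlap J I K N2 δt1 δt2 xh p1 p2 r1 r2 →
        SchemeEqs J I K N2 δt1 δt2 xh p0 f1 f2 p1' p2' r1' r2' →
        InterfaceCoarseFluxOverlap J I K N2 δt1 δt2 xh p1' p2' r1' r2' →
        ∀ n ∈ Icc 1 N2,
          (∀ k ∈ Icc 1 K, (∀ j ∈ Icc 1 I, p1 n k j = p1' n k j) ∧ r1 n k = r1' n k)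
          ∧ (∀ j ∈ Icc (I + 1) J, p2 n j = p2' n j) ∧ r2 n = r2' n :=
  wellposed_overlap_coarse_flux_general J I K N2 hI1 hIJ hK δt1 hδt1 δt2 hδt2 xh hxmono p0 f1 f2
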